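/- arXiv:2311.06869 — 3 statements merged into one kernel-verified Lean document; each statement's English description precedes it below -/
import Mathlib

section
/- Semigroup property of the Hadamard fractional integral: for a > 0 and α, β > 0, ₕI_a^α (ₕI_a^β f) = ₕI_a^{α+β} f, for f continuous on [a, T]. -/
set_option maxHeartbeats 1000000
open MeasureTheory Set

lemma hadExpImage {b c : ℝ} (hb : 0 < b) (hbc : b < c) :
    (fun x => b * Real.exp x) '' Set.Ioo 0 (Real.log (c / b)) = Set.Ioo b c := by
  have hc : 0 < c := hb.trans hbc
  ext y
  constructor
  · rintro ⟨x, ⟨hx0, hxL⟩, rfl⟩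
    have h1 : 1 < Real.exp x := Real.one_lt_exp_iff.mpr hx0
    have h2 : Real.exp x < Real.exp (Real.log (c / b)) := Real.exp_lt_exp.mpr hxL
    rw [Real.exp_log (by positivity)] at h2
    refine ⟨?_, ?_⟩
    · show b < b * Real.exp x
      nlinarith
    · show b * Real.exp x < c
      calc b * Real.exp x < b * (c / b) := by nlinarith
        _ = c := by field_simp
  · rintro ⟨hby, hyc⟩
    have hy : 0 < y := hb.trans hby
    refine ⟨Real.log (y / b), ⟨?_, ?_⟩, ?_⟩
    · exact Real.log_pos (by rw [lt_div_iff₀ hb]; linarith)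
    · apply Real.log_lt_log (by positivity)
      rw [div_lt_div_iff₀ hb hb]; nlinarith
    · show b * Real.exp (Real.log (y / b)) = y
      rw [Real.exp_log (by positivity)]; field_simp

lemma hadDeriv {b : ℝ} (L : ℝ) : ∀ x ∈ Set.Ioo (0:ℝ) L,
    HasDerivWithinAt (fun x => b * Real.exp x) (b * Real.exp x) (Set.Ioo (0:ℝ) L) x :=
  fun x _ => ((Real.hasDerivAt_exp x).const_mul b).hasDerivWithinAt

lemma hadInj {b : ℝ} (hb : 0 < b) (L : ℝ) :
    Set.InjOn (fun x => b * Real.exp x) (Set.Ioo (0:ℝ) L) :=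
  (((mul_right_injective₀ hb.ne').comp Real.exp_injective).injOn)

lemma hadSubst {b c : ℝ} (hb : 0 < b) (hbc : b < c) (g : ℝ → ℝ) :
    ∫ x in Set.Ioo b c, g x
      = ∫ x in Set.Ioo 0 (Real.log (c / b)), (b * Real.exp x) * g (b * Real.exp x) := by
  rw [← hadExpImage hb hbc,
    integral_image_eq_integral_abs_deriv_smul measurableSet_Ioo (hadDeriv _) (hadInj hb _) g]
  refine setIntegral_congr_fun measurableSet_Ioo fun x _ => ?_
  rw [smul_eq_mul, abs_of_pos (by positivity)]

lemma hadSubstInt {b c : ℝ} (hb : 0 < b) (hbc : b < c) (g : ℝ → ℝ) :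
    IntegrableOn g (Set.Ioo b c)
      ↔ IntegrableOn (fun x => (b * Real.exp x) * g (b * Real.exp x))
          (Set.Ioo 0 (Real.log (c / b))) := by
  rw [← hadExpImage hb hbc,
    integrableOn_image_iff_integrableOn_abs_deriv_smul measurableSet_Ioo (hadDeriv _) (hadInj hb _) g]
  constructor <;> intro h <;> refine h.congr_fun (fun x _ => ?_) measurableSet_Ioo
  · dsimp only
    rw [smul_eq_mul, abs_of_pos (by positivity)]
  · dsimp only
    rw [smul_eq_mul, abs_of_pos (by positivity)]

lemma hadLogEq {b c : ℝ} (hb : 0 < b) (hbc : b < c) {x : ℝ} :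
    Real.log (c / (b * Real.exp x)) = Real.log (c / b) - x := by
  have hc : 0 < c := hb.trans hbc
  rw [Real.log_div hc.ne' (by positivity), Real.log_mul hb.ne' (Real.exp_ne_zero x),
    Real.log_exp, Real.log_div hc.ne' hb.ne']
  ring

lemma hadLpos {b c : ℝ} (hb : 0 < b) (hbc : b < c) : 0 < Real.log (c / b) :=
  Real.log_pos ((one_lt_div hb).mpr hbc)

lemma reflRpowInt {L γ : ℝ} (hγ : 0 < γ) :
    IntegrableOn (fun x => (L - x) ^ (γ - 1)) (Set.Ioo (0:ℝ) L) := by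
  have h0 : IntervalIntegrable (fun x : ℝ => x ^ (γ - 1)) volume 0 L :=
    intervalIntegral.intervalIntegrable_rpow' (by linarith)
  have h := h0.comp_sub_left L
  rw [sub_zero, sub_self] at h
  exact h.symm.1.mono_set Set.Ioo_subset_Ioc_self

lemma reflRpowVal {L γ : ℝ} (hL : 0 < L) (hγ : 0 < γ) :
    ∫ x in Set.Ioo (0:ℝ) L, (L - x) ^ (γ - 1) = L ^ γ / γ := by
  rw [← integral_Ioc_eq_integral_Ioo, ← intervalIntegral.integral_of_le hL.le,
    intervalIntegral.integral_comp_sub_left (fun x => x ^ (γ - 1)) L]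
  simp only [sub_self, sub_zero]
  rw [integral_rpow (Or.inl (by linarith))]
  rw [Real.zero_rpow (by linarith), sub_add_cancel]
  ring_nf

lemma upperKernelValue {b c γ : ℝ} (hb : 0 < b) (hbc : b < c) (hγ : 0 < γ) :
    ∫ r in Set.Ioo b c, Real.log (c / r) ^ (γ - 1) / r = Real.log (c / b) ^ γ / γ := by
  rw [hadSubst hb hbc]
  rw [setIntegral_congr_fun measurableSet_Ioo
    (g := fun x => (Real.log (c / b) - x) ^ (γ - 1)) fun x _ => ?_]
  · exact reflRpowVal (hadLpos hb hbc) hγ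
  · have hbe : (0:ℝ) < b * Real.exp x := by positivity
    rw [hadLogEq hb hbc]
    field_simp

lemma upperKernelIntegrable {b c γ : ℝ} (hb : 0 < b) (hbc : b < c) (hγ : 0 < γ) :
    IntegrableOn (fun r => Real.log (c / r) ^ (γ - 1) / r) (Set.Ioo b c) := by
  rw [hadSubstInt hb hbc]
  refine (reflRpowInt hγ).congr_fun (fun x _ => ?_) measurableSet_Ioo
  have hbe : (0:ℝ) < b * Real.exp x := by positivity
  rw [hadLogEq hb hbc]
  field_simp

lemma realBeta {α β : ℝ} (hα : 0 < α) (hβ : 0 < β) :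
    ∫ x in (0:ℝ)..1, (1 - x) ^ (α - 1) * x ^ (β - 1)
      = Real.Gamma α * Real.Gamma β / Real.Gamma (α + β) := by
  have key := Complex.Gamma_mul_Gamma_eq_betaIntegral
    (s := (β:ℂ)) (t := (α:ℂ)) (by simpa using hβ) (by simpa using hα)
  have hInt : Complex.betaIntegral (β:ℂ) (α:ℂ)
      = ((∫ x in (0:ℝ)..1, (1 - x) ^ (α - 1) * x ^ (β - 1) : ℝ) : ℂ) := by
    rw [Complex.betaIntegral, ← intervalIntegral.integral_ofReal]
    refine intervalIntegral.integral_congr fun x hx => ?_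
    rw [Set.uIcc_of_le (by norm_num : (0:ℝ) ≤ 1)] at hx
    show (x:ℂ) ^ ((β:ℂ) - 1) * ((1:ℂ) - (x:ℂ)) ^ ((α:ℂ) - 1)
        = (((1 - x) ^ (α - 1) * x ^ (β - 1) : ℝ) : ℂ)
    rw [Complex.ofReal_mul, Complex.ofReal_cpow (by linarith [hx.2] : (0:ℝ) ≤ 1 - x),
      Complex.ofReal_cpow hx.1]
    push_cast
    ring
  rw [hInt, show ((β:ℂ) + (α:ℂ)) = (((β + α : ℝ)):ℂ) by push_cast; ring] at key
  rw [Complex.Gamma_ofReal, Complex.Gamma_ofReal, Complex.Gamma_ofReal,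
    ← Complex.ofReal_mul, ← Complex.ofReal_mul] at key
  have kr : Real.Gamma β * Real.Gamma α
      = Real.Gamma (β + α) * ∫ x in (0:ℝ)..1, (1 - x) ^ (α - 1) * x ^ (β - 1) :=
    Complex.ofReal_inj.mp key
  have hne : Real.Gamma (α + β) ≠ 0 := (Real.Gamma_pos_of_pos (by linarith)).ne'
  rw [add_comm β α] at kr
  field_simp
  linarith [kr]

lemma hadKernel {r t α β : ℝ} (hr : 0 < r) (hrt : r < t) (hα : 0 < α) (hβ : 0 < β) :
    ∫ s in Set.Ioo r t, Real.log (t / s) ^ (α - 1) * Real.log (s / r) ^ (β - 1) / s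
      = Real.log (t / r) ^ (α + β - 1)
          * (Real.Gamma α * Real.Gamma β / Real.Gamma (α + β)) := by
  set L := Real.log (t / r) with hLdef
  have hL : 0 < L := hadLpos hr hrt
  rw [hadSubst hr hrt]
  rw [setIntegral_congr_fun measurableSet_Ioo
    (g := fun x => (L - x) ^ (α - 1) * x ^ (β - 1)) (fun x _ => ?_)]
  · have step1 : ∫ x in Set.Ioo (0:ℝ) L, (L - x) ^ (α - 1) * x ^ (β - 1)
        = ∫ x in (0:ℝ)..L, (L - x) ^ (α - 1) * x ^ (β - 1) := by
      rw [intervalIntegral.integral_of_le hL.le, integral_Ioc_eq_integral_Ioo]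
    rw [step1]
    have step2 : (∫ x in (0:ℝ)..L, (L - x) ^ (α - 1) * x ^ (β - 1))
        = L • ∫ u in (0:ℝ)..1, (L - L * u) ^ (α - 1) * (L * u) ^ (β - 1) := by
      rw [intervalIntegral.smul_integral_comp_mul_left
        (fun x => (L - x) ^ (α - 1) * x ^ (β - 1)) L, mul_zero, mul_one]
    rw [step2]
    have step3 : (∫ u in (0:ℝ)..1, (L - L * u) ^ (α - 1) * (L * u) ^ (β - 1))
        = ∫ u in (0:ℝ)..1, L ^ (α - 1) * L ^ (β - 1) * ((1 - u) ^ (α - 1) * u ^ (β - 1)) := by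
      refine intervalIntegral.integral_congr fun u hu => ?_
      rw [Set.uIcc_of_le (by norm_num : (0:ℝ) ≤ 1)] at hu
      show (L - L * u) ^ (α - 1) * (L * u) ^ (β - 1)
          = L ^ (α - 1) * L ^ (β - 1) * ((1 - u) ^ (α - 1) * u ^ (β - 1))
      rw [show L - L * u = L * (1 - u) by ring, Real.mul_rpow hL.le (by linarith [hu.2]),
        Real.mul_rpow hL.le hu.1]
      ring
    rw [step3, intervalIntegral.integral_const_mul, realBeta hα hβ]
    rw [smul_eq_mul]
    rw [show L * (L ^ (α - 1) * L ^ (β - 1)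
          * (Real.Gamma α * Real.Gamma β / Real.Gamma (α + β)))
        = (L ^ (1:ℝ) * (L ^ (α - 1) * L ^ (β - 1)))
          * (Real.Gamma α * Real.Gamma β / Real.Gamma (α + β)) by
      rw [Real.rpow_one]; ring]
    rw [← Real.rpow_add hL, ← Real.rpow_add hL,
      show (1:ℝ) + (α - 1 + (β - 1)) = α + β - 1 by ring]
  · have hre : (0:ℝ) < r * Real.exp x := by positivity
    rw [show r * Real.exp x / r = Real.exp x by field_simp, Real.log_exp,
      hadLogEq hr hrt]
    field_simp
    rw [hLdef]; ring

noncomputable def hadK (a t α β : ℝ) (g : ℝ → ℝ) (s r : ℝ) : ℝ :=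
  Real.log (t / s) ^ (α - 1) / s * (Real.log (s / r) ^ (β - 1) * g r / r)

noncomputable def hadH (a t α β : ℝ) (g : ℝ → ℝ) (s r : ℝ) : ℝ :=
  (Set.Ioo a s).indicator (hadK a t α β g s) r

/-- Semigroup property of the Hadamard fractional integral: for `α, β > 0` and
`f` continuous on `[a,T]`, `ₕI_a^α(ₕI_a^β f) = ₕI_a^{α+β} f` on `(a,T]`. -/
theorem hadamard_integral_semigroup
    (a T α β : ℝ) (ha : 0 < a) (hT : a < T) (hα : 0 < α) (hβ : 0 < β)
    (f : ℝ → ℝ) (hf : ContinuousOn f (Set.Icc a T))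
    (t : ℝ) (ht : t ∈ Set.Ioc a T) :
    (1 / Real.Gamma α) *
        ∫ s in a..t, Real.log (t / s) ^ (α - 1) *
          ((1 / Real.Gamma β) * ∫ r in a..s, Real.log (s / r) ^ (β - 1) * f r / r) / s =
      (1 / Real.Gamma (α + β)) *
        ∫ s in a..t, Real.log (t / s) ^ (α + β - 1) * f s / s := by
  obtain ⟨hat, htT⟩ := ht
  have h0t : 0 < t := ha.trans hat
  -- a globally continuous version of `f`
  have hproj : Continuous fun x : ℝ => max a (min x T) :=
    continuous_const.max (continuous_id.min continuous_const)
  have hmem : ∀ x : ℝ, max a (min x T) ∈ Set.Icc a T := fun x =>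
    ⟨le_max_left _ _, max_le hT.le (min_le_right x T)⟩
  set g : ℝ → ℝ := fun x => f (max a (min x T)) with hgdef
  have hg : Continuous g := hf.comp_continuous hproj hmem
  have hgf : ∀ x ∈ Set.Icc a T, g x = f x := fun x hx => by
    rw [hgdef]
    simp only [min_eq_left hx.2, max_eq_right hx.1]
  obtain ⟨M, hM⟩ : ∃ M, ∀ x ∈ Set.Icc a t, ‖g x‖ ≤ M :=
    isCompact_Icc.exists_bound_of_continuousOn hg.continuousOn
  have hM0 : 0 ≤ M := (norm_nonneg (g a)).trans (hM a ⟨le_refl a, hat.le⟩)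
  -- replace `f` by `g` in the goal
  have inner_eq : ∀ s ∈ Set.Icc a t,
      (∫ r in a..s, Real.log (s / r) ^ (β - 1) * f r / r)
        = ∫ r in a..s, Real.log (s / r) ^ (β - 1) * g r / r := fun s hs =>
    intervalIntegral.integral_congr fun r hr => by
      rw [Set.uIcc_of_le hs.1] at hr
      rw [hgf r ⟨hr.1, hr.2.trans (hs.2.trans htT)⟩]
  rw [show (∫ s in a..t, Real.log (t / s) ^ (α - 1) *
          ((1 / Real.Gamma β) * ∫ r in a..s, Real.log (s / r) ^ (β - 1) * f r / r) / s)
      = ∫ s in a..t, Real.log (t / s) ^ (α - 1) *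
          ((1 / Real.Gamma β) * ∫ r in a..s, Real.log (s / r) ^ (β - 1) * g r / r) / s from
    intervalIntegral.integral_congr fun s hs => by
      rw [Set.uIcc_of_le hat.le] at hs
      rw [inner_eq s hs]]
  rw [show (∫ s in a..t, Real.log (t / s) ^ (α + β - 1) * f s / s)
      = ∫ s in a..t, Real.log (t / s) ^ (α + β - 1) * g s / s from
    intervalIntegral.integral_congr fun s hs => by
      rw [Set.uIcc_of_le hat.le] at hs
      rw [hgf s ⟨hs.1, hs.2.trans htT⟩]]
  -- notation
  set μ : Measure ℝ := volume.restrict (Set.Ioo a t) with hμdef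
  set K := hadK a t α β g with hKdef
  set H := hadH a t α β g with hHdef
  -- integrability of the inner kernel
  have keyInt : ∀ s ∈ Set.Ioo a t,
      IntegrableOn (fun r => Real.log (s / r) ^ (β - 1) * g r / r) (Set.Ioo a s) := by
    intro s hs
    refine Integrable.mono' ((upperKernelIntegrable ha hs.1 hβ).const_mul M)
      (Measurable.aestronglyMeasurable
        ((((Real.measurable_log.comp (measurable_const.div measurable_id)).pow
          measurable_const).mul hg.measurable).div measurable_id)) ?_
    rw [ae_restrict_iff' measurableSet_Ioo]
    refine Filter.Eventually.of_forall fun r hr => ?_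
    have hr0 : 0 < r := ha.trans hr.1
    have hk0 : 0 ≤ Real.log (s / r) ^ (β - 1) :=
      Real.rpow_nonneg (Real.log_nonneg ((one_le_div hr0).mpr hr.2.le)) _
    have hgM : |g r| ≤ M := by
      have := hM r ⟨hr.1.le, hr.2.le.trans hs.2.le⟩
      rwa [Real.norm_eq_abs] at this
    rw [Real.norm_eq_abs, abs_div, abs_mul, abs_of_nonneg hk0, abs_of_pos hr0,
      show M * (Real.log (s / r) ^ (β - 1) / r) = Real.log (s / r) ^ (β - 1) * M / r by ring]
    gcongr
  have hKsInt : ∀ s ∈ Set.Ioo a t, IntegrableOn (K s) (Set.Ioo a s) := fun s hs => by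
    rw [hKdef]
    exact (keyInt s hs).const_mul (Real.log (t / s) ^ (α - 1) / s)
  -- measurability of the kernel on the product space
  have hmeasH : AEStronglyMeasurable (Function.uncurry H) (μ.prod μ) := by
    have hrepr : Function.uncurry H = Set.indicator {p : ℝ × ℝ | a < p.2 ∧ p.2 < p.1}
        (fun p => Real.log (t / p.1) ^ (α - 1) / p.1 *
          (Real.log (p.1 / p.2) ^ (β - 1) * g p.2 / p.2)) := by
      funext p
      simp only [Function.uncurry, hHdef, hadH, hKdef, hadK, Set.indicator_apply,
        Set.mem_Ioo, Set.mem_setOf_eq]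
    rw [hrepr]
    refine Measurable.aestronglyMeasurable (Measurable.indicator ?_ ?_)
    · have m1 : Measurable fun p : ℝ × ℝ => Real.log (t / p.1) ^ (α - 1) / p.1 := by
        measurability
      have m2 : Measurable fun p : ℝ × ℝ => Real.log (p.1 / p.2) ^ (β - 1) := by
        measurability
      exact m1.mul ((m2.mul (hg.measurable.comp measurable_snd)).div measurable_snd)
    · rw [Set.setOf_and]
      exact (measurableSet_lt measurable_const measurable_snd).inter
        (measurableSet_lt measurable_snd measurable_fst)
  -- Fubini hypotheses
  have h1 : ∀ᵐ s ∂μ, Integrable (fun r => H s r) μ := by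
    rw [hμdef, ae_restrict_iff' measurableSet_Ioo]
    refine Filter.Eventually.of_forall fun s hs => ?_
    have hsub : Set.Ioo a s ⊆ Set.Ioo a t := Set.Ioo_subset_Ioo_right hs.2.le
    show Integrable ((Set.Ioo a s).indicator (K s)) μ
    rw [integrable_indicator_iff measurableSet_Ioo]
    show Integrable (K s) (μ.restrict (Set.Ioo a s))
    rw [hμdef, Measure.restrict_restrict measurableSet_Ioo, Set.inter_eq_left.mpr hsub]
    exact hKsInt s hs
  have h2 : Integrable (fun s => ∫ r, ‖H s r‖ ∂μ) μ := by
    refine Integrable.mono'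
      ((upperKernelIntegrable ha hat hα).const_mul (M * (Real.log (t / a) ^ β / β)))
      hmeasH.norm.integral_prod_right' ?_
    rw [hμdef, ae_restrict_iff' measurableSet_Ioo]
    refine Filter.Eventually.of_forall fun s hs => ?_
    have hs0 : 0 < s := ha.trans hs.1
    have hsub : Set.Ioo a s ⊆ Set.Ioo a t := Set.Ioo_subset_Ioo_right hs.2.le
    have hC0 : 0 ≤ Real.log (t / s) ^ (α - 1) / s :=
      div_nonneg (Real.rpow_nonneg (Real.log_nonneg ((one_le_div hs0).mpr hs.2.le)) _) hs0.le
    have e1 : ∫ r, ‖H s r‖ ∂μ = ∫ r in Set.Ioo a s, ‖K s r‖ := by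
      rw [show (fun r => ‖H s r‖) = (Set.Ioo a s).indicator fun r => ‖K s r‖ from
        funext fun r => norm_indicator_eq_indicator_norm (K s) r]
      rw [hμdef, integral_indicator measurableSet_Ioo,
        Measure.restrict_restrict measurableSet_Ioo, Set.inter_eq_left.mpr hsub]
    rw [Real.norm_eq_abs, abs_of_nonneg (integral_nonneg fun r => norm_nonneg _), e1]
    calc ∫ r in Set.Ioo a s, ‖K s r‖
        ≤ ∫ r in Set.Ioo a s,
            Real.log (t / s) ^ (α - 1) / s * (M * (Real.log (s / r) ^ (β - 1) / r)) := by
          refine setIntegral_mono_on ((hKsInt s hs).norm)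
            (((upperKernelIntegrable ha hs.1 hβ).const_mul M).const_mul _)
            measurableSet_Ioo fun r hr => ?_
          have hr0 : 0 < r := ha.trans hr.1
          have hk0 : 0 ≤ Real.log (s / r) ^ (β - 1) :=
            Real.rpow_nonneg (Real.log_nonneg ((one_le_div hr0).mpr hr.2.le)) _
          have hgM : |g r| ≤ M := by
            have := hM r ⟨hr.1.le, hr.2.le.trans hs.2.le⟩
            rwa [Real.norm_eq_abs] at this
          rw [hKdef]
          show |Real.log (t / s) ^ (α - 1) / s * (Real.log (s / r) ^ (β - 1) * g r / r)| ≤ _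
          rw [abs_mul, abs_of_nonneg hC0, abs_div, abs_mul, abs_of_nonneg hk0, abs_of_pos hr0,
            show Real.log (t / s) ^ (α - 1) / s * (M * (Real.log (s / r) ^ (β - 1) / r))
              = Real.log (t / s) ^ (α - 1) / s * (Real.log (s / r) ^ (β - 1) * M / r) by ring]
          gcongr
      _ = Real.log (t / s) ^ (α - 1) / s * (M * (Real.log (s / a) ^ β / β)) := by
          rw [integral_const_mul, integral_const_mul, upperKernelValue ha hs.1 hβ]
      _ ≤ M * (Real.log (t / a) ^ β / β) * (Real.log (t / s) ^ (α - 1) / s) := by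
          rw [mul_comm]
          have hlog : Real.log (s / a) ≤ Real.log (t / a) :=
            Real.log_le_log (by positivity) (by gcongr; exact hs.2.le)
          have hrp : Real.log (s / a) ^ β ≤ Real.log (t / a) ^ β :=
            Real.rpow_le_rpow (Real.log_nonneg ((one_le_div ha).mpr hs.1.le)) hlog hβ.le
          gcongr
  have hInt : Integrable (Function.uncurry H) (μ.prod μ) :=
    (integrable_prod_iff hmeasH).mpr ⟨h1, h2⟩
  have swap := integral_integral_swap (f := H) hInt
  -- identify the iterated integral with the left-hand side
  have claim1 : ∫ s in Set.Ioo a t, Real.log (t / s) ^ (α - 1) *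
        (∫ r in Set.Ioo a s, Real.log (s / r) ^ (β - 1) * g r / r) / s
      = ∫ s, (∫ r, H s r ∂μ) ∂μ := by
    refine setIntegral_congr_fun measurableSet_Ioo fun s hs => ?_
    have hsub : Set.Ioo a s ⊆ Set.Ioo a t := Set.Ioo_subset_Ioo_right hs.2.le
    have e2 : (∫ r, H s r ∂μ) = ∫ r in Set.Ioo a s, K s r := by
      rw [show (fun r => H s r) = (Set.Ioo a s).indicator (K s) from rfl,
        hμdef, integral_indicator measurableSet_Ioo,
        Measure.restrict_restrict measurableSet_Ioo, Set.inter_eq_left.mpr hsub]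
    rw [e2, hKdef, show (hadK a t α β g s) = fun r => Real.log (t / s) ^ (α - 1) / s *
        (Real.log (s / r) ^ (β - 1) * g r / r) from rfl, integral_const_mul]
    ring
  -- identify the swapped integral with the right-hand side
  have claim3 : ∫ r, (∫ s, H s r ∂μ) ∂μ
      = ∫ r in Set.Ioo a t, g r / r * (Real.log (t / r) ^ (α + β - 1) *
          (Real.Gamma α * Real.Gamma β / Real.Gamma (α + β))) := by
    refine setIntegral_congr_fun measurableSet_Ioo fun r hr => ?_
    have hr0 : 0 < r := ha.trans hr.1
    have ept : ∀ s ∈ Set.Ioo a t, H s r = (Set.Ioi r).indicator (fun s => K s r) s := by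
      intro s hsm
      rw [hHdef]
      show (Set.Ioo a s).indicator (hadK a t α β g s) r = _
      simp only [Set.indicator_apply, Set.mem_Ioo, Set.mem_Ioi]
      by_cases h : r < s
      · simp [h, hr.1, hKdef]
      · simp [h]
    have e2 : (∫ s, H s r ∂μ) = ∫ s in Set.Ioo r t, K s r := by
      rw [hμdef]
      rw [setIntegral_congr_fun measurableSet_Ioo ept]
      rw [integral_indicator measurableSet_Ioi,
        Measure.restrict_restrict measurableSet_Ioi,
        show Set.Ioi r ∩ Set.Ioo a t = Set.Ioo r t from ?_]
      ext x
      simp only [Set.mem_inter_iff, Set.mem_Ioi, Set.mem_Ioo]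
      constructor
      · rintro ⟨h1, _, h3⟩; exact ⟨h1, h3⟩
      · rintro ⟨h1, h2⟩; exact ⟨h1, hr.1.trans h1, h2⟩
    have e3 : ∫ s in Set.Ioo r t, K s r
        = g r / r * ∫ s in Set.Ioo r t,
            Real.log (t / s) ^ (α - 1) * Real.log (s / r) ^ (β - 1) / s := by
      rw [← integral_const_mul]
      refine setIntegral_congr_fun measurableSet_Ioo fun s hsm => ?_
      rw [hKdef]
      show Real.log (t / s) ^ (α - 1) / s * (Real.log (s / r) ^ (β - 1) * g r / r) = _
      ring
    rw [e2, e3, hadKernel hr0 hr.2 hα hβ]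
  have claim4 : ∫ r in Set.Ioo a t, g r / r * (Real.log (t / r) ^ (α + β - 1) *
          (Real.Gamma α * Real.Gamma β / Real.Gamma (α + β)))
      = (Real.Gamma α * Real.Gamma β / Real.Gamma (α + β)) *
          ∫ r in Set.Ioo a t, Real.log (t / r) ^ (α + β - 1) * g r / r := by
    rw [← integral_const_mul]
    refine setIntegral_congr_fun measurableSet_Ioo fun r hr => ?_
    ring
  -- put everything together
  have EL : (∫ s in a..t, Real.log (t / s) ^ (α - 1) *
        ((1 / Real.Gamma β) * ∫ r in a..s, Real.log (s / r) ^ (β - 1) * g r / r) / s)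
      = (1 / Real.Gamma β) * ∫ s in Set.Ioo a t, Real.log (t / s) ^ (α - 1) *
          (∫ r in Set.Ioo a s, Real.log (s / r) ^ (β - 1) * g r / r) / s := by
    rw [intervalIntegral.integral_of_le hat.le, integral_Ioc_eq_integral_Ioo,
      ← integral_const_mul]
    refine setIntegral_congr_fun measurableSet_Ioo fun s hs => ?_
    rw [intervalIntegral.integral_of_le hs.1.le, integral_Ioc_eq_integral_Ioo]
    ring
  have ER : (∫ s in a..t, Real.log (t / s) ^ (α + β - 1) * g s / s)
      = ∫ s in Set.Ioo a t, Real.log (t / s) ^ (α + β - 1) * g s / s := by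
    rw [intervalIntegral.integral_of_le hat.le, integral_Ioc_eq_integral_Ioo]
  rw [EL, ER, claim1, swap, claim3, claim4]
  have hΓa : Real.Gamma α ≠ 0 := (Real.Gamma_pos_of_pos hα).ne'
  have hΓb : Real.Gamma β ≠ 0 := (Real.Gamma_pos_of_pos hβ).ne'
  have hΓab : Real.Gamma (α + β) ≠ 0 := (Real.Gamma_pos_of_pos (by linarith)).ne'
  field_simp
end

section
/- Generalization of the CQ symbol error estimate to arbitrary real exponents: if for z in a sector |ψ(z)| ≍ |z|, |ψ(z) − z| ≤ C τ^p |z|^{p+1}, and |ψ(z)^α − z^α| ≤ C τ^p |z|^{p+α} for some fixed α ∈ (0,1), then for every real s there is a constant C_s with |ψ(z)^s − z^s| ≤ C_s τ^p |z|^{p+s}. -/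
open Complex Metric Real



lemma cpow_lipschitz_near_one' (s : ℝ) :
    ∃ L > (0:ℝ), ∀ w : ℂ, ‖w - 1‖ ≤ 1/2 →
      ‖w ^ (s:ℂ) - 1‖ ≤ L * ‖w - 1‖ := by
  set M : ℝ := |s| * max ((1/2 : ℝ) ^ (s - 1)) ((3/2 : ℝ) ^ (s - 1)) with hM
  have hM0 : 0 ≤ M := by positivity
  refine ⟨M + 1, by positivity, ?_⟩
  intro w hw
  have hball : ∀ x : ℂ, x ∈ closedBall (1:ℂ) (1/2) → x ∈ slitPlane := by
    intro x hx
    rw [mem_closedBall, Complex.dist_eq] at hx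
    have hre : |x.re - 1| ≤ 1/2 := by
      calc |x.re - 1| = |(x - 1).re| := by simp
        _ ≤ ‖x - 1‖ := Complex.abs_re_le_norm _
        _ ≤ 1/2 := hx
    have := abs_le.mp hre
    exact Or.inl (by linarith [this.1])
  have key : ∀ x ∈ closedBall (1:ℂ) (1/2),
      HasFDerivWithinAt (fun w : ℂ => w ^ (s:ℂ))
        ((1 : ℂ →L[ℂ] ℂ).smulRight ((s:ℂ) * x ^ ((s:ℂ) - 1))) (closedBall (1:ℂ) (1/2)) x := by
    intro x hx
    have hd : HasDerivAt (fun w : ℂ => w ^ (s:ℂ)) ((s:ℂ) * x ^ ((s:ℂ) - 1)) x :=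
      (Complex.hasStrictDerivAt_cpow_const (c := (s:ℂ)) (hball x hx)).hasDerivAt
    exact (hd.hasFDerivAt).hasFDerivWithinAt
  have keybd : ∀ x ∈ closedBall (1:ℂ) (1/2),
      ‖(1 : ℂ →L[ℂ] ℂ).smulRight ((s:ℂ) * x ^ ((s:ℂ) - 1))‖ ≤ M := by
    intro x hx
    rw [ContinuousLinearMap.norm_smulRight_apply, norm_one, one_mul]
    rw [mem_closedBall, Complex.dist_eq] at hx
    have htri : (1:ℝ) ≤ ‖x‖ + ‖x - 1‖ := by
      have := norm_add_le x (1 - x)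
      simp only [add_sub_cancel] at this
      rw [norm_sub_rev x 1]
      simpa using this
    have hxlb : (1:ℝ)/2 ≤ ‖x‖ := by linarith
    have hxub : ‖x‖ ≤ 3/2 := by
      have := norm_add_le (x - 1) 1
      simp only [sub_add_cancel, norm_one] at this
      linarith
    have habs : ‖(s:ℂ) * x ^ ((s:ℂ) - 1)‖ = |s| * ‖x‖ ^ (s - 1) := by
      rw [norm_mul]
      have h2 : ((s:ℂ) - 1) = ((s - 1 : ℝ) : ℂ) := by push_cast; ring
      rw [h2, Complex.norm_cpow_real,
        Complex.norm_real, Real.norm_eq_abs]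
    rw [habs]
    apply mul_le_mul_of_nonneg_left _ (abs_nonneg s)
    rcases le_or_gt 0 (s - 1) with h | h
    · exact le_max_of_le_right (Real.rpow_le_rpow (by linarith) hxub h)
    · exact le_max_of_le_left (Real.rpow_le_rpow_of_nonpos (by norm_num) hxlb h.le)
  have hw1 : w ∈ closedBall (1:ℂ) (1/2) := by rw [mem_closedBall, Complex.dist_eq]; exact hw
  have h1 : (1:ℂ) ∈ closedBall (1:ℂ) (1/2) := mem_closedBall_self (by norm_num)
  have := (convex_closedBall (1:ℂ) (1/2)).norm_image_sub_le_of_norm_hasFDerivWithin_le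
    key keybd h1 hw1
  simp only [Complex.one_cpow] at this
  calc ‖w ^ (s:ℂ) - 1‖ ≤ M * ‖w - 1‖ := this
    _ ≤ (M+1) * ‖w - 1‖ := by
        nlinarith [norm_nonneg (w-1)]



lemma log_sub_int' (a b c : ℂ) (ha : a ≠ 0) (hb : b ≠ 0) (hc : c ≠ 0) (habc : a = b * c) :
    ∃ n : ℤ, Complex.log a - Complex.log b - Complex.log c = n * (2 * Real.pi * Complex.I)
      ∧ |(n:ℝ)| ≤ 1 := by
  have hexp : Complex.exp (Complex.log a - Complex.log b - Complex.log c) = 1 := by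
    rw [Complex.exp_sub, Complex.exp_sub, Complex.exp_log ha, Complex.exp_log hb,
      Complex.exp_log hc, habc]
    field_simp
  rw [Complex.exp_eq_one_iff] at hexp
  obtain ⟨n, hn⟩ := hexp
  refine ⟨n, hn, ?_⟩
  have him : (Complex.log a - Complex.log b - Complex.log c).im
      = a.arg - b.arg - c.arg := by
    simp [Complex.log_im]
  have him2 : ((n:ℂ) * (2 * Real.pi * Complex.I)).im = (n:ℝ) * (2 * Real.pi) := by
    simp
  have heq : a.arg - b.arg - c.arg = (n:ℝ) * (2 * Real.pi) := by
    rw [← him, hn, him2]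
  have hπ := Real.pi_pos
  have ha1 := Complex.neg_pi_lt_arg a
  have ha2 := Complex.arg_le_pi a
  have hb1 := Complex.neg_pi_lt_arg b
  have hb2 := Complex.arg_le_pi b
  have hc1 := Complex.neg_pi_lt_arg c
  have hc2 := Complex.arg_le_pi c
  have h3 : |(n:ℝ) * (2 * Real.pi)| < 3 * Real.pi := by
    rw [← heq, abs_lt]; constructor <;> linarith
  rw [abs_mul, abs_of_pos (by linarith : (0:ℝ) < 2 * Real.pi)] at h3
  have hlt : |(n:ℝ)| < 2 := by nlinarith
  have : |n| < 2 := by exact_mod_cast (by push_cast; exact hlt : |(n:ℝ)| < ((2:ℤ):ℝ))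
  have : |n| ≤ 1 := by omega
  calc |(n:ℝ)| = ((|n|:ℤ):ℝ) := by push_cast; ring
    _ ≤ 1 := by exact_mod_cast this


/-- Generalization of the convolution-quadrature symbol error estimate to
arbitrary real exponents: if uniformly in `τ > 0` and `z` in the contour set
`S τ` one has `|ψ z| ≍ |z|`, `|ψ z − z| ≤ C τ^p |z|^{p+1}` and
`|ψ z^α − z^α| ≤ C τ^p |z|^{p+α}` for some `α ∈ (0,1)`, then for every real `s`
there is a constant `C_s` with `|ψ z^s − z^s| ≤ C_s τ^p |z|^{p+s}`. -/
theorem cq_symbol_rpow_error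
    (p : ℕ) (hp : 1 ≤ p) (α : ℝ) (hα0 : 0 < α) (hα1 : α < 1)
    (ψ : ℝ → ℂ → ℂ) (S : ℝ → Set ℂ) (c₁ c₂ C : ℝ) (hc₁ : 0 < c₁) (hC : 0 < C)
    (hlow : ∀ τ > (0:ℝ), ∀ z ∈ S τ, c₁ * ‖z‖ ≤ ‖ψ τ z‖)
    (hup : ∀ τ > (0:ℝ), ∀ z ∈ S τ, ‖ψ τ z‖ ≤ c₂ * ‖z‖)
    (h1 : ∀ τ > (0:ℝ), ∀ z ∈ S τ,
      ‖ψ τ z - z‖ ≤ C * τ ^ p * ‖z‖ ^ ((p : ℝ) + 1))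
    (hαbd : ∀ τ > (0:ℝ), ∀ z ∈ S τ,
      ‖ψ τ z ^ (α : ℂ) - z ^ (α : ℂ)‖ ≤
        C * τ ^ p * ‖z‖ ^ ((p : ℝ) + α)) :
    ∀ s : ℝ, ∃ Cs > (0:ℝ), ∀ τ > (0:ℝ), ∀ z ∈ S τ,
      ‖ψ τ z ^ (s : ℂ) - z ^ (s : ℂ)‖ ≤
        Cs * τ ^ p * ‖z‖ ^ ((p : ℝ) + s) := by
  intro s
  obtain ⟨Ls, hLs0, hLs⟩ := cpow_lipschitz_near_one' s
  obtain ⟨Lα, hLα0, hLα⟩ := cpow_lipschitz_near_one' α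
  -- positive gap for the branch obstruction
  set m : ℝ := ‖Complex.exp (2 * Real.pi * α * Complex.I) - 1‖ with hm
  have hm0 : 0 < m := by
    rw [hm]
    apply norm_pos_iff.mpr
    rw [sub_ne_zero, Ne, Complex.exp_eq_one_iff]
    rintro ⟨k, hk⟩
    have hI : (2 * (Real.pi:ℂ) * α * Complex.I) = ((α:ℂ)) * (2 * Real.pi * Complex.I) := by
      ring
    rw [hI] at hk
    have h2 : (2 * (Real.pi:ℂ) * Complex.I) ≠ 0 := by
      simp [Real.pi_ne_zero, Complex.I_ne_zero]
    have hαk : (α : ℂ) = (k : ℂ) := by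
      field_simp at hk
      exact hk
    have hα : α = (k : ℝ) := by exact_mod_cast hαk
    rcases le_or_gt k 0 with h | h
    · have : (k:ℝ) ≤ 0 := by exact_mod_cast h
      linarith
    · have : (1:ℝ) ≤ (k:ℝ) := by exact_mod_cast h
      linarith
  set ε : ℝ := min (1/2) (min (m / (4 * Lα)) (m / 4)) with hε
  have hε0 : 0 < ε := by
    apply lt_min (by norm_num)
    exact lt_min (by positivity) (by positivity)
  have hεhalf : ε ≤ 1/2 := min_le_left _ _
  have hεα : ε ≤ m / (4 * Lα) := le_trans (min_le_right _ _) (min_le_left _ _)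
  have hεm : ε ≤ m / 4 := le_trans (min_le_right _ _) (min_le_right _ _)
  set b : ℝ := max c₂ 1 with hb
  have hb1 : (1:ℝ) ≤ b := le_max_right _ _
  have hb0 : (0:ℝ) < b := by linarith
  set A : ℝ := c₁ ^ s + b ^ s + 1 with hA
  have hA0 : 0 < A := by
    have := Real.rpow_pos_of_pos hc₁ s
    have := Real.rpow_pos_of_pos hb0 s
    linarith
  set K : ℝ := max (A / ε) Ls with hK
  have hK0 : 0 < K := lt_of_lt_of_le (by positivity) (le_max_left _ _)
  refine ⟨K * C, by positivity, ?_⟩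
  intro τ hτ z hz
  by_cases hz0 : z = 0
  · -- degenerate case z = 0
    subst hz0
    have hψ0 : ψ τ 0 = 0 := by
      have := h1 τ hτ 0 hz
      simp only [sub_zero, norm_zero] at this
      have hz1 : (0:ℝ) ^ ((p:ℝ) + 1) = 0 :=
        Real.zero_rpow (by positivity)
      rw [hz1, mul_zero] at this
      exact norm_eq_zero.mp (le_antisymm this (norm_nonneg _))
    rw [hψ0]
    simp only [sub_self, norm_zero]
    have : (0:ℝ) ≤ ‖(0:ℂ)‖ ^ ((p:ℝ) + s) := by
      rw [norm_zero]; exact Real.rpow_nonneg le_rfl _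
    positivity
  · -- main case
    have hza : 0 < ‖z‖ := norm_pos_iff.mpr hz0
    have hψa : 0 < ‖ψ τ z‖ :=
      lt_of_lt_of_le (by positivity) (hlow τ hτ z hz)
    have hψ0 : ψ τ z ≠ 0 := by
      intro h; rw [h, norm_zero] at hψa; exact lt_irrefl _ hψa
    set D : ℝ := C * τ ^ p * ‖z‖ ^ ((p:ℝ)) with hD
    have hD0 : 0 < D := by
      have : (0:ℝ) < ‖z‖ ^ ((p:ℝ)) := Real.rpow_pos_of_pos hza _
      positivity
    have hδ : ‖ψ τ z - z‖ ≤ D * ‖z‖ := by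
      have := h1 τ hτ z hz
      rwa [Real.rpow_add hza, Real.rpow_one, ← mul_assoc] at this
    have hδα : ‖ψ τ z ^ (α:ℂ) - z ^ (α:ℂ)‖ ≤ D * ‖z‖ ^ α := by
      have := hαbd τ hτ z hz
      rwa [Real.rpow_add hza, ← mul_assoc] at this
    -- goal in terms of D
    have hgoal : K * C * τ ^ p * ‖z‖ ^ ((p:ℝ) + s)
        = K * (D * ‖z‖ ^ s) := by
      rw [Real.rpow_add hza, hD]; ring
    rw [hgoal]
    have hzs0 : (0:ℝ) ≤ ‖z‖ ^ s := Real.rpow_nonneg hza.le _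
    rcases le_or_gt ε D with hcase | hcase
    · -- large D: trivial bound
      have habs1 : ‖ψ τ z ^ (s:ℂ) - z ^ (s:ℂ)‖
          ≤ ‖ψ τ z‖ ^ s + ‖z‖ ^ s := by
        calc ‖ψ τ z ^ (s:ℂ) - z ^ (s:ℂ)‖
            ≤ ‖ψ τ z ^ (s:ℂ)‖ + ‖z ^ (s:ℂ)‖ := by
              simpa [sub_eq_add_neg] using
                norm_add_le (ψ τ z ^ (s:ℂ)) (-(z ^ (s:ℂ)))
          _ = ‖ψ τ z‖ ^ s + ‖z‖ ^ s := by
              rw [Complex.norm_cpow_real, Complex.norm_cpow_real]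
      have hbb : ‖ψ τ z‖ ≤ b * ‖z‖ := by
        have h2 := hup τ hτ z hz
        have h3 : c₂ * ‖z‖ ≤ b * ‖z‖ :=
          mul_le_mul_of_nonneg_right (le_max_left _ _) hza.le
        linarith
      have hc₁s := Real.rpow_pos_of_pos hc₁ s
      have hbs := Real.rpow_pos_of_pos hb0 s
      have hψs : ‖ψ τ z‖ ^ s ≤ (c₁ ^ s + b ^ s) * ‖z‖ ^ s := by
        rcases le_or_gt 0 s with hs | hs
        · have h4 := Real.rpow_le_rpow (norm_nonneg _) hbb hs
          rw [Real.mul_rpow hb0.le hza.le] at h4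
          have h5 : 0 ≤ c₁ ^ s * ‖z‖ ^ s := mul_nonneg hc₁s.le hzs0
          rw [add_mul]; linarith
        · have h4 := Real.rpow_le_rpow_of_nonpos (by positivity) (hlow τ hτ z hz) hs.le
          rw [Real.mul_rpow hc₁.le hza.le] at h4
          have h5 : 0 ≤ b ^ s * ‖z‖ ^ s := mul_nonneg hbs.le hzs0
          rw [add_mul]; linarith
      have hA' : ‖ψ τ z ^ (s:ℂ) - z ^ (s:ℂ)‖ ≤ A * ‖z‖ ^ s := by
        have h6 : (c₁ ^ s + b ^ s) * ‖z‖ ^ s + ‖z‖ ^ s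
            = A * ‖z‖ ^ s := by rw [hA]; ring
        linarith
      have hAD : A ≤ (A / ε) * D := by
        rw [div_mul_eq_mul_div, le_div_iff₀ hε0]
        exact mul_le_mul_of_nonneg_left hcase hA0.le
      calc ‖ψ τ z ^ (s:ℂ) - z ^ (s:ℂ)‖ ≤ A * ‖z‖ ^ s := hA'
        _ ≤ ((A / ε) * D) * ‖z‖ ^ s := mul_le_mul_of_nonneg_right hAD hzs0
        _ = (A / ε) * (D * ‖z‖ ^ s) := by ring
        _ ≤ K * (D * ‖z‖ ^ s) :=
            mul_le_mul_of_nonneg_right (le_max_left _ _) (mul_nonneg hD0.le hzs0)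
    · -- small D: branch analysis
      set w : ℂ := ψ τ z / z with hw
      have hwne : w ≠ 0 := div_ne_zero hψ0 hz0
      have hw1 : ‖w - 1‖ ≤ D := by
        have : w - 1 = (ψ τ z - z) / z := by
          rw [hw, div_sub_one hz0]
        rw [this, norm_div]
        rw [div_le_iff₀ hza]
        exact hδ
      have hw1' : ‖w - 1‖ ≤ 1/2 := le_trans hw1 (by linarith)
      obtain ⟨n, hn, hn1⟩ := log_sub_int' (ψ τ z) z w hψ0 hz0 hwne (by
        rw [hw]; field_simp)
      set d : ℂ := Complex.log (ψ τ z) - Complex.log z - Complex.log w with hd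
      have hsplit : ∀ c : ℂ, ψ τ z ^ c = w ^ c * z ^ c * Complex.exp (d * c) := by
        intro c
        rw [Complex.cpow_def_of_ne_zero hψ0, Complex.cpow_def_of_ne_zero hwne,
          Complex.cpow_def_of_ne_zero hz0, ← Complex.exp_add, ← Complex.exp_add]
        congr 1
        have : Complex.log (ψ τ z) = Complex.log w + Complex.log z + d := by
          rw [hd]; ring
        rw [this]; ring
      -- show n = 0
      have hn0 : n = 0 := by
        by_contra hne
        have hαz : (0:ℝ) < ‖z‖ ^ α := Real.rpow_pos_of_pos hza _
        have hfact : ψ τ z ^ (α:ℂ) - z ^ (α:ℂ)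
            = z ^ (α:ℂ) * (w ^ (α:ℂ) * Complex.exp (d * α) - 1) := by
          rw [hsplit (α:ℂ)]; ring
        have hX : ‖w ^ (α:ℂ) * Complex.exp (d * α) - 1‖ ≤ D := by
          have h6 := hδα
          rw [hfact, norm_mul, Complex.norm_cpow_real, mul_comm D] at h6
          exact le_of_mul_le_mul_left h6 hαz
        -- |exp(dα)| = 1 and |exp(dα) - 1| = m
        have hexpabs : ‖Complex.exp (d * α)‖ = 1 := by
          rw [Complex.norm_exp]
          have : (d * α).re = 0 := by
            rw [hn]
            simp
          rw [this, Real.exp_zero]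
        have hwα : ‖w ^ (α:ℂ) - 1‖ ≤ Lα * D :=
          le_trans (hLα w hw1') (mul_le_mul_of_nonneg_left hw1 hLα0.le)
        have hmle : m ≤ ‖Complex.exp (d * α) - 1‖ := by
          have hcases : n = 1 ∨ n = -1 := by
            have : |(n:ℝ)| ≤ 1 := hn1
            have h2 : |n| ≤ 1 := by
              exact_mod_cast (by push_cast; exact this : |(n:ℝ)| ≤ ((1:ℤ):ℝ))
            have h3 := abs_le.mp h2
            omega
          rcases hcases with h | h
          · have : d * α = 2 * Real.pi * α * Complex.I := by
              rw [hn, h]; push_cast; ring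
            rw [this]
          · have heq : d * α = -(2 * Real.pi * α * Complex.I) := by
              rw [hn, h]; push_cast; ring
            rw [heq]
            have hc : (starRingEnd ℂ) (2 * (Real.pi:ℂ) * (α:ℂ) * Complex.I)
                = -(2 * (Real.pi:ℂ) * (α:ℂ) * Complex.I) := by
              simp only [map_mul, Complex.conj_I, Complex.conj_ofReal, map_ofNat]
              ring
            have hconj : Complex.exp (-(2 * (Real.pi:ℂ) * α * Complex.I)) - 1
                = (starRingEnd ℂ) (Complex.exp (2 * Real.pi * α * Complex.I) - 1) := by
              rw [map_sub, ← Complex.exp_conj, hc, map_one]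
            rw [hconj, Complex.norm_conj]
        have hcontra : m ≤ m / 2 := by
          have step : ‖Complex.exp (d * α) - 1‖
              ≤ Lα * D + D := by
            calc ‖Complex.exp (d * α) - 1‖
                = ‖(Complex.exp (d * α) - w ^ (α:ℂ) * Complex.exp (d * α))
                  + (w ^ (α:ℂ) * Complex.exp (d * α) - 1)‖ := by ring_nf
              _ ≤ ‖Complex.exp (d * α) - w ^ (α:ℂ) * Complex.exp (d * α)‖
                  + ‖w ^ (α:ℂ) * Complex.exp (d * α) - 1‖ :=
                  norm_add_le _ _
              _ ≤ Lα * D + D := by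
                  apply add_le_add _ hX
                  have : Complex.exp (d * α) - w ^ (α:ℂ) * Complex.exp (d * α)
                      = (1 - w ^ (α:ℂ)) * Complex.exp (d * α) := by ring
                  rw [this, norm_mul, hexpabs, mul_one]
                  rw [← norm_neg]
                  simpa [neg_sub] using hwα
          have h4 : Lα * D ≤ m / 4 := by
            have : D < m / (4 * Lα) := lt_of_lt_of_le hcase hεα
            rw [lt_div_iff₀ (by positivity)] at this
            nlinarith
          have h5 : D ≤ m / 4 := le_trans hcase.le hεm
          linarith [le_trans hmle step]
        linarith
      -- n = 0 : clean identity
      have hd0 : d = 0 := by rw [hn, hn0]; simp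
      have hfact : ψ τ z ^ (s:ℂ) - z ^ (s:ℂ) = z ^ (s:ℂ) * (w ^ (s:ℂ) - 1) := by
        rw [hsplit (s:ℂ), hd0]
        simp only [zero_mul, Complex.exp_zero, mul_one]
        ring
      rw [hfact, norm_mul, Complex.norm_cpow_real]
      calc ‖z‖ ^ s * ‖w ^ (s:ℂ) - 1‖
          ≤ ‖z‖ ^ s * (Ls * D) := by
            apply mul_le_mul_of_nonneg_left _ hzs0
            exact le_trans (hLs w hw1') (mul_le_mul_of_nonneg_left hw1 hLs0.le)
        _ = Ls * (D * ‖z‖ ^ s) := by ring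
        _ ≤ K * (D * ‖z‖ ^ s) :=
            mul_le_mul_of_nonneg_right (le_max_right _ _) (mul_nonneg hD0.le hzs0)
end

section
/- Derivative bound for the weighted convolution (Lemma 4.4, second part): with β ∈ (0,1), p ∈ ℤ⁺, Φ₁ smooth, and Φ(x) = x^β ∫_0^x (x−w)^{p−1} Φ₁(w) dw, there is a constant C (depending on p, β, but not on x or Φ₁) such that |Φ^{(p)}(x)| ≤ C ( x^{β−1} ∫_0^x |Φ₁(w)| dw + x^β |Φ₁(x)| ) for all x in (0, T̄]. -/
open MeasureTheory Finset Set

namespace WCDB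

noncomputable def Fint (Φ₁ : ℝ → ℝ) (j : ℕ) (y : ℝ) : ℝ := ∫ w in (0:ℝ)..y, w ^ j * Φ₁ w

noncomputable def gc (Φ₁ : ℝ → ℝ) (m : ℕ) (y : ℝ) : ℝ := ∫ w in (0:ℝ)..y, (y - w) ^ m * Φ₁ w

variable {Φ₁ : ℝ → ℝ}


lemma hasDerivAt_Fint (hΦ : Continuous Φ₁) (j : ℕ) (y : ℝ) :
    HasDerivAt (Fint Φ₁ j) (y ^ j * Φ₁ y) y :=
  (((continuous_pow j).mul hΦ).integral_hasStrictDerivAt 0 y).hasDerivAt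


lemma contDiff_Fint (hΦ : ContDiff ℝ (⊤ : ℕ∞) Φ₁) (j : ℕ) (n : ℕ) : ContDiff ℝ n (Fint Φ₁ j) := by
  induction n with
  | zero =>
    exact contDiff_zero.2 (continuous_iff_continuousAt.2
      fun y => (hasDerivAt_Fint hΦ.continuous j y).continuousAt)
  | succ n ih =>
    have hcast : ((n + 1 : ℕ) : WithTop ℕ∞) = (n : WithTop ℕ∞) + 1 := by norm_cast
    rw [hcast]
    refine contDiff_succ_iff_deriv.2
      ⟨fun y => (hasDerivAt_Fint hΦ.continuous j y).differentiableAt, by simp, ?_⟩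
    have hd : deriv (Fint Φ₁ j) = fun y => y ^ j * Φ₁ y :=
      funext fun y => (hasDerivAt_Fint hΦ.continuous j y).deriv
    rw [hd]
    exact (contDiff_id.pow j).mul (hΦ.of_le (by exact_mod_cast le_top))


lemma gc_eq (hΦ : Continuous Φ₁) (m : ℕ) (y : ℝ) :
    gc Φ₁ m y = ∑ k ∈ range (m + 1),
      ((m.choose k : ℝ) * (-1) ^ (m - k)) * (y ^ k * Fint Φ₁ (m - k) y) := by
  have h1 : ∀ w : ℝ, (y - w) ^ m * Φ₁ w
      = ∑ k ∈ range (m + 1),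
        ((m.choose k : ℝ) * (-1) ^ (m - k) * y ^ k) * (w ^ (m - k) * Φ₁ w) := by
    intro w
    rw [sub_eq_add_neg, add_pow, Finset.sum_mul]
    refine Finset.sum_congr rfl fun k hk => ?_
    rw [neg_pow]
    ring
  simp only [gc, h1]
  rw [intervalIntegral.integral_finset_sum]
  · refine Finset.sum_congr rfl fun k hk => ?_
    rw [intervalIntegral.integral_const_mul]
    unfold Fint
    ring
  · intro k hk
    exact (continuous_const.mul ((continuous_pow _).mul hΦ)).intervalIntegrable _ _


lemma hasDerivAt_gc_succ (hΦ : Continuous Φ₁) (m : ℕ) (y : ℝ) :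
    HasDerivAt (gc Φ₁ (m + 1)) (((m : ℝ) + 1) * gc Φ₁ m y) y := by
  have hfun : gc Φ₁ (m + 1) = fun z => ∑ k ∈ range (m + 2),
      (((m + 1).choose k : ℝ) * (-1) ^ (m + 1 - k)) * (z ^ k * Fint Φ₁ (m + 1 - k) z) :=
    funext fun z => gc_eq hΦ (m + 1) z
  rw [hfun]
  have hterm : ∀ k ∈ range (m + 2),
      HasDerivAt (fun z : ℝ => (((m + 1).choose k : ℝ) * (-1) ^ (m + 1 - k))
          * (z ^ k * Fint Φ₁ (m + 1 - k) z))
        ((((m + 1).choose k : ℝ) * (-1) ^ (m + 1 - k)) *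
          (((k : ℝ) * y ^ (k - 1)) * Fint Φ₁ (m + 1 - k) y
            + y ^ k * (y ^ (m + 1 - k) * Φ₁ y))) y := by
    intro k hk
    exact ((hasDerivAt_pow k y).mul (hasDerivAt_Fint hΦ (m + 1 - k) y)).const_mul _
  have hsum := HasDerivAt.fun_sum hterm
  refine HasDerivAt.congr_deriv hsum (Eq.symm ?_)
  -- show (m+1) * gc Φ₁ m y = the sum of derivatives
  have hsplit : ∀ k ∈ range (m + 2),
      (((m + 1).choose k : ℝ) * (-1) ^ (m + 1 - k)) *
          (((k : ℝ) * y ^ (k - 1)) * Fint Φ₁ (m + 1 - k) y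
            + y ^ k * (y ^ (m + 1 - k) * Φ₁ y))
      = (((m + 1).choose k : ℝ) * (-1) ^ (m + 1 - k)) *
          (((k : ℝ) * y ^ (k - 1)) * Fint Φ₁ (m + 1 - k) y)
        + (((m + 1).choose k : ℝ) * (-1) ^ (m + 1 - k)) * (y ^ (m + 1) * Φ₁ y) := by
    intro k hk
    have hk' : k ≤ m + 1 := by simpa [Nat.lt_succ_iff] using hk
    have hyk : y ^ k * y ^ (m + 1 - k) = y ^ (m + 1) := by
      rw [← pow_add]; congr 1; omega
    rw [mul_add]
    congr 1
    rw [← hyk]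
    ring
  rw [Finset.sum_congr rfl hsplit, Finset.sum_add_distrib, ← Finset.sum_mul]
  have hzero : ∑ k ∈ range (m + 2), (((m + 1).choose k : ℝ) * (-1) ^ (m + 1 - k)) = 0 := by
    have h := add_pow (1 : ℝ) (-1) (m + 1)
    simp only [one_pow, one_mul, add_neg_cancel] at h
    rw [zero_pow (Nat.succ_ne_zero m)] at h
    calc ∑ k ∈ range (m + 2), (((m + 1).choose k : ℝ) * (-1) ^ (m + 1 - k))
        = ∑ k ∈ range (m + 2), ((-1 : ℝ)) ^ (m + 1 - k) * ((m + 1).choose k) :=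
          Finset.sum_congr rfl fun k _ => mul_comm _ _
      _ = 0 := h.symm
  rw [hzero, zero_mul, add_zero, gc_eq hΦ m y, Finset.mul_sum]
  conv_rhs => rw [Finset.sum_range_succ']
  simp only [Nat.cast_zero, zero_mul, mul_zero, add_zero]
  refine Finset.sum_congr rfl fun j hj => ?_
  simp only [Nat.succ_sub_succ, Nat.succ_sub_one, Nat.add_sub_cancel, Nat.sub_zero]
  have hch : (((m + 1).choose (j + 1) : ℝ)) * ((j : ℝ) + 1) = ((m : ℝ) + 1) * (m.choose j) := by
    exact_mod_cast (Nat.add_one_mul_choose_eq m j).symm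
  push_cast
  linear_combination (-((-1 : ℝ)) ^ (m - j)) * (y ^ j * Fint Φ₁ (m - j) y) * hch

lemma hasDerivAt_gc_zero (hΦ : Continuous Φ₁) (y : ℝ) :
    HasDerivAt (gc Φ₁ 0) (Φ₁ y) y := by
  have h : gc Φ₁ 0 = fun z => ∫ w in (0:ℝ)..z, Φ₁ w := by
    funext z; simp [gc]
  rw [h]
  exact (hΦ.integral_hasStrictDerivAt 0 y).hasDerivAt


lemma contDiff_gc (hΦ : ContDiff ℝ (⊤ : ℕ∞) Φ₁) (m : ℕ) (n : ℕ) : ContDiff ℝ n (gc Φ₁ m) := by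
  have h : gc Φ₁ m = fun y => ∑ k ∈ range (m + 1),
      ((m.choose k : ℝ) * (-1) ^ (m - k)) * (y ^ k * Fint Φ₁ (m - k) y) :=
    funext fun y => gc_eq hΦ.continuous m y
  rw [h]
  exact ContDiff.sum fun k _ =>
    contDiff_const.mul ((contDiff_id.pow k).mul (contDiff_Fint hΦ _ n))


lemma iteratedDeriv_gc (hΦ : Continuous Φ₁) (m : ℕ) :
    ∀ j, j ≤ m → iteratedDeriv j (gc Φ₁ m)
      = fun y => (m.descFactorial j : ℝ) * gc Φ₁ (m - j) y := by
  intro j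
  induction j with
  | zero => intro _; simp [iteratedDeriv_zero]
  | succ j ih =>
    intro hj
    rw [iteratedDeriv_succ, ih (Nat.le_of_succ_le hj)]
    funext y
    have h1 : m - j = (m - (j + 1)) + 1 := by omega
    have hdg : ∀ z : ℝ, HasDerivAt (gc Φ₁ (m - j))
        ((((m - (j + 1) : ℕ) : ℝ) + 1) * gc Φ₁ (m - (j + 1)) z) z := by
      intro z
      rw [h1]
      exact hasDerivAt_gc_succ hΦ _ z
    rw [deriv_const_mul _ (hdg y).differentiableAt, (hdg y).deriv]
    have h2 : (m.descFactorial (j + 1) : ℝ)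
        = (((m - (j + 1) : ℕ) : ℝ) + 1) * (m.descFactorial j : ℝ) := by
      rw [Nat.descFactorial_succ]
      have : ((m - j : ℕ) : ℝ) = ((m - (j + 1) : ℕ) : ℝ) + 1 := by
        exact_mod_cast congrArg Nat.cast h1
      push_cast
      rw [this]
    rw [h2]; ring


lemma iteratedDeriv_gc_top (hΦ : Continuous Φ₁) (m : ℕ) :
    iteratedDeriv (m + 1) (gc Φ₁ m) = fun y => (m.factorial : ℝ) * Φ₁ y := by
  rw [iteratedDeriv_succ, iteratedDeriv_gc hΦ m m le_rfl]
  funext y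
  simp only [Nat.sub_self]
  rw [deriv_const_mul _ (hasDerivAt_gc_zero hΦ y).differentiableAt,
    (hasDerivAt_gc_zero hΦ y).deriv, Nat.descFactorial_self]


lemma abs_gc_le (hΦ : Continuous Φ₁) {m : ℕ} {x : ℝ} (hx : 0 < x) :
    |gc Φ₁ m x| ≤ x ^ m * ∫ w in (0:ℝ)..x, |Φ₁ w| := by
  have h1 : |gc Φ₁ m x| ≤ ∫ w in (0:ℝ)..x, |(x - w) ^ m * Φ₁ w| :=
    intervalIntegral.abs_integral_le_integral_abs hx.le
  refine h1.trans ?_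
  rw [← intervalIntegral.integral_const_mul]
  apply intervalIntegral.integral_mono_on hx.le
  · exact (((continuous_const.sub continuous_id').pow m).mul hΦ).abs.intervalIntegrable _ _
  · exact (continuous_const.mul hΦ.abs).intervalIntegrable _ _
  · intro w hw
    rw [abs_mul, abs_pow]
    have hxw : |x - w| ≤ x := by
      rw [abs_of_nonneg (by linarith [hw.2] : (0:ℝ) ≤ x - w)]; linarith [hw.1]
    gcongr


lemma iteratedDeriv_rpow (β : ℝ) (i : ℕ) :
    ∀ x : ℝ, 0 < x → iteratedDeriv i (fun y : ℝ => y ^ β) x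
      = (∏ k ∈ range i, (β - k)) * x ^ (β - i) := by
  induction i with
  | zero => intro x hx; simp
  | succ i ih =>
    intro x hx
    rw [iteratedDeriv_succ]
    have hev : iteratedDeriv i (fun y : ℝ => y ^ β)
        =ᶠ[nhds x] fun y => (∏ k ∈ range i, (β - k)) * y ^ (β - i) := by
      filter_upwards [isOpen_Ioi.mem_nhds hx] with y hy using ih y hy
    rw [hev.deriv_eq,
      (((Real.hasDerivAt_rpow_const (p := β - i) (Or.inl hx.ne'))).const_mul
        (∏ k ∈ range i, (β - (k:ℝ)))).deriv,
      Finset.prod_range_succ]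
    have hexp : β - (i : ℝ) - 1 = β - ((i : ℕ) + 1 : ℕ) := by push_cast; ring
    rw [← hexp]
    ring

end WCDB

open WCDB


/-- Derivative bound for the weighted convolution: for `β ∈ (0,1)`, `p ∈ ℤ⁺`,
and `Φ(x) = x^β ∫_0^x (x−w)^{p−1} Φ₁(w) dw`, there is a constant `C`
(depending only on `p` and `β`, not on `x` or `Φ₁`) such that
`|Φ^{(p)}(x)| ≤ C (x^{β−1} ∫_0^x |Φ₁| + x^β |Φ₁(x)|)` on `(0, T̄]`. -/
theorem weighted_convolution_deriv_bound
    (β : ℝ) (hβ0 : 0 < β) (hβ1 : β < 1) (p : ℕ) (hp : 1 ≤ p) :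
    ∃ C > (0:ℝ), ∀ Φ₁ : ℝ → ℝ, ContDiff ℝ (⊤ : ℕ∞) Φ₁ → ∀ Tb > (0:ℝ),
      ∀ x ∈ Set.Ioc (0:ℝ) Tb,
      |iteratedDeriv p
          (fun y => y ^ β * ∫ w in (0:ℝ)..y, (y - w) ^ (p - 1) * Φ₁ w) x| ≤
        C * (x ^ (β - 1) * (∫ w in (0:ℝ)..x, |Φ₁ w|) + x ^ β * |Φ₁ x|) := by
  classical
  refine ⟨1 + ∑ i ∈ range (p + 1),
      (p.choose i : ℝ) * |∏ k ∈ range i, (β - k)| * (p - 1).factorial,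
    by positivity, ?_⟩
  intro Φ₁ hΦ Tb hTb x hx
  have hx0 : 0 < x := hx.1
  have hxI : x ∈ Ioi (0:ℝ) := hx0
  have hInonneg : 0 ≤ ∫ w in (0:ℝ)..x, |Φ₁ w| :=
    intervalIntegral.integral_nonneg hx0.le (fun w _ => abs_nonneg _)
  set I := ∫ w in (0:ℝ)..x, |Φ₁ w| with hI
  set B := x ^ (β - 1) * I + x ^ β * |Φ₁ x| with hBdef
  have hBnonneg : 0 ≤ B := by
    have h1 : (0:ℝ) ≤ x ^ (β - 1) := (Real.rpow_pos_of_pos hx0 _).le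
    have h2 : (0:ℝ) ≤ x ^ β := (Real.rpow_pos_of_pos hx0 _).le
    have := abs_nonneg (Φ₁ x)
    positivity
  have hfeq : (fun y : ℝ => y ^ β * ∫ w in (0:ℝ)..y, (y - w) ^ (p - 1) * Φ₁ w)
      = fun y => y ^ β * gc Φ₁ (p - 1) y := rfl
  rw [hfeq]
  have h1 : |iteratedDeriv p (fun y : ℝ => y ^ β * gc Φ₁ (p - 1) y) x|
      = ‖iteratedFDerivWithin ℝ p (fun y : ℝ => y ^ β * gc Φ₁ (p - 1) y) (Ioi 0) x‖ := by
    rw [iteratedFDerivWithin_of_isOpen p isOpen_Ioi hxI,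
      norm_iteratedFDeriv_eq_norm_iteratedDeriv, Real.norm_eq_abs]
  rw [h1]
  have hrs : ContDiffOn ℝ p (fun y : ℝ => y ^ β) (Ioi 0) := fun y hy =>
    (Real.contDiffAt_rpow_const_of_ne (ne_of_gt hy)).contDiffWithinAt
  have hGs : ContDiffOn ℝ p (gc Φ₁ (p - 1)) (Ioi 0) := (contDiff_gc hΦ (p - 1) p).contDiffOn
  have hmain := norm_iteratedFDerivWithin_mul_le (𝕜 := ℝ) hrs hGs
    isOpen_Ioi.uniqueDiffOn hxI (le_refl (p : WithTop ℕ∞))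
  refine hmain.trans ?_
  have hfw : ∀ i : ℕ, ‖iteratedFDerivWithin ℝ i (fun y : ℝ => y ^ β) (Ioi 0) x‖
      = |∏ k ∈ range i, (β - k)| * x ^ (β - i) := by
    intro i
    rw [iteratedFDerivWithin_of_isOpen i isOpen_Ioi hxI,
      norm_iteratedFDeriv_eq_norm_iteratedDeriv, Real.norm_eq_abs,
      iteratedDeriv_rpow β i x hx0, abs_mul,
      abs_of_pos (Real.rpow_pos_of_pos hx0 _)]
  have hgw : ∀ j : ℕ, ‖iteratedFDerivWithin ℝ j (gc Φ₁ (p - 1)) (Ioi 0) x‖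
      = |iteratedDeriv j (gc Φ₁ (p - 1)) x| := by
    intro j
    rw [iteratedFDerivWithin_of_isOpen j isOpen_Ioi hxI,
      norm_iteratedFDeriv_eq_norm_iteratedDeriv, Real.norm_eq_abs]
  have hterm : ∀ i ∈ range (p + 1),
      (p.choose i : ℝ) * ‖iteratedFDerivWithin ℝ i (fun y : ℝ => y ^ β) (Ioi 0) x‖ *
        ‖iteratedFDerivWithin ℝ (p - i) (gc Φ₁ (p - 1)) (Ioi 0) x‖
      ≤ ((p.choose i : ℝ) * |∏ k ∈ range i, (β - k)| * (p - 1).factorial) * B := by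
    intro i hi
    have hip : i ≤ p := by simpa [Nat.lt_succ_iff] using hi
    rw [hfw, hgw]
    rcases Nat.eq_zero_or_pos i with hi0 | hi1
    · subst hi0
      have hptop : iteratedDeriv (p - 0) (gc Φ₁ (p - 1)) x = ((p-1).factorial : ℝ) * Φ₁ x := by
        have hp1 : p - 0 = (p - 1) + 1 := by omega
        rw [hp1, iteratedDeriv_gc_top hΦ.continuous]
      rw [hptop]
      simp only [Nat.choose_zero_right, Nat.cast_one, Finset.prod_range_zero, abs_one,
        Nat.cast_zero, sub_zero, one_mul]
      rw [abs_mul, Nat.abs_cast]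
      calc x ^ β * (((p-1).factorial : ℝ) * |Φ₁ x|)
          = ((p-1).factorial : ℝ) * (x ^ β * |Φ₁ x|) := by ring
        _ ≤ ((p-1).factorial : ℝ) * B := by
            apply mul_le_mul_of_nonneg_left _ (by positivity)
            rw [hBdef]
            have : 0 ≤ x ^ (β - 1) * I := by positivity
            linarith
    · -- 1 ≤ i
      have hpi : p - i ≤ p - 1 := by omega
      have hder : iteratedDeriv (p - i) (gc Φ₁ (p - 1))
          = fun y => (((p-1).descFactorial (p - i) : ℕ) : ℝ) * gc Φ₁ ((p-1) - (p - i)) y :=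
        iteratedDeriv_gc hΦ.continuous (p - 1) (p - i) hpi
      have hidx : (p - 1) - (p - i) = i - 1 := by omega
      rw [hder]
      simp only [hidx]
      set d : ℕ := (p-1).descFactorial (p - i) with hd
      have hdle : (d : ℝ) ≤ ((p-1).factorial : ℝ) := by
        have h := Nat.factorial_mul_descFactorial hpi
        have : d ≤ (p-1).factorial := by
          calc d ≤ ((p-1) - (p - i)).factorial * d :=
                Nat.le_mul_of_pos_left _ (Nat.factorial_pos _)
            _ = (p-1).factorial := h
        exact_mod_cast this
      have habs : |(d : ℝ) * gc Φ₁ (i - 1) x| ≤ (d : ℝ) * (x ^ (i - 1) * I) := by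
        rw [abs_mul, Nat.abs_cast]
        exact mul_le_mul_of_nonneg_left (abs_gc_le hΦ.continuous hx0) (Nat.cast_nonneg _)
      have hpow : x ^ (β - i) * x ^ ((i - 1 : ℕ)) = x ^ (β - 1) := by
        rw [← Real.rpow_natCast x (i - 1), ← Real.rpow_add hx0]
        congr 1
        have hc : ((i - 1 : ℕ) : ℝ) = (i : ℝ) - 1 := by
          push_cast [Nat.cast_sub hi1]; ring
        rw [hc]; ring
      calc (p.choose i : ℝ) * (|∏ k ∈ range i, (β - k)| * x ^ (β - (i:ℕ))) *
            |(d : ℝ) * gc Φ₁ (i - 1) x|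
          ≤ (p.choose i : ℝ) * (|∏ k ∈ range i, (β - k)| * x ^ (β - (i:ℕ))) *
            ((d : ℝ) * (x ^ (i - 1) * I)) := by
            apply mul_le_mul_of_nonneg_left habs
            have := Real.rpow_pos_of_pos hx0 (β - (i:ℕ))
            positivity
        _ = ((p.choose i : ℝ) * |∏ k ∈ range i, (β - k)| * (d:ℝ)) *
            ((x ^ (β - (i:ℕ)) * x ^ ((i - 1 : ℕ))) * I) := by ring
        _ = ((p.choose i : ℝ) * |∏ k ∈ range i, (β - k)| * (d:ℝ)) * (x ^ (β - 1) * I) := by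
            rw [hpow]
        _ ≤ ((p.choose i : ℝ) * |∏ k ∈ range i, (β - k)| * ((p-1).factorial : ℝ)) *
            (x ^ (β - 1) * I) := by
            apply mul_le_mul_of_nonneg_right _ (by positivity)
            have h0 : (0:ℝ) ≤ (p.choose i : ℝ) * |∏ k ∈ range i, (β - k)| := by positivity
            calc (p.choose i : ℝ) * |∏ k ∈ range i, (β - k)| * (d:ℝ)
                ≤ (p.choose i : ℝ) * |∏ k ∈ range i, (β - k)| * ((p-1).factorial : ℝ) :=
                mul_le_mul_of_nonneg_left hdle h0
              _ = _ := rfl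
        _ ≤ ((p.choose i : ℝ) * |∏ k ∈ range i, (β - k)| * ((p-1).factorial : ℝ)) * B := by
            apply mul_le_mul_of_nonneg_left _ (by positivity)
            rw [hBdef]
            have : 0 ≤ x ^ β * |Φ₁ x| := by positivity
            linarith
  calc ∑ i ∈ range (p + 1),
        (p.choose i : ℝ) * ‖iteratedFDerivWithin ℝ i (fun y : ℝ => y ^ β) (Ioi 0) x‖ *
          ‖iteratedFDerivWithin ℝ (p - i) (gc Φ₁ (p - 1)) (Ioi 0) x‖
      ≤ ∑ i ∈ range (p + 1),
        ((p.choose i : ℝ) * |∏ k ∈ range i, (β - k)| * (p - 1).factorial) * B :=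
        Finset.sum_le_sum hterm
    _ = (∑ i ∈ range (p + 1),
        (p.choose i : ℝ) * |∏ k ∈ range i, (β - k)| * (p - 1).factorial) * B :=
        (Finset.sum_mul _ _ _).symm
    _ ≤ (1 + ∑ i ∈ range (p + 1),
        (p.choose i : ℝ) * |∏ k ∈ range i, (β - k)| * (p - 1).factorial) * B := by
        apply mul_le_mul_of_nonneg_right _ hBnonneg
        linarith
end
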